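/- For every f ∈ L²(ℝ,ℂ), every N ∈ ℕ and every z ∈ ℂ, the N-th complex derivative of the Bargmann transform of f at z equals (e^{−z²/2}/π^{1/4}) ∫_ℝ conj(f(x)) He_N(√2·x − z) e^{√2·xz − x²/2} dx, where He_N is the probabilists' Hermite polynomial. -/

import Mathlib

/-!
Moving `e^{-z²/2}` inside the integral turns the integrand into `conj (f x) · He_N(w) · K(x, z)`
with `w = √2 x - z` and `K(x, z) = exp (√2 x z - x²/2 - z²/2)`. Since `∂_z K = w K`, the Hermite
recurrence `He_{N+1}(w) = w He_N(w) - He_N'(w)` gives `∂_z (He_N(w) K) = He_{N+1}(w) K`.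
Differentiation under the integral sign is justified because, locally uniformly in `z`,
`|P(w) K(x, z)| ≤ C e^{-x²/4}` for every polynomial `P`; the product of this Gaussian with
`f ∈ L²` is integrable by Cauchy–Schwarz.
-/

open MeasureTheory Real Nat

/-- The Bargmann transform `L_ℂ f(z) = (e^{−z²/2}/π^{1/4}) ∫_ℝ conj(f(x)) e^{√2·xz − x²/2} dx`. -/
noncomputable def bargmann (f : ℝ → ℂ) (z : ℂ) : ℂ :=
  Complex.exp (-z ^ 2 / 2) / ((π ^ ((1 : ℝ) / 4) : ℝ) : ℂ) *
    ∫ x : ℝ, (starRingEnd ℂ) (f x) *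
      Complex.exp ((Real.sqrt 2 : ℂ) * (x : ℂ) * z - (x : ℂ) ^ 2 / 2)

open Polynomial

theorem Polynomial.exists_norm_aeval_le_mul_exp {A : Type*} [NormedRing A] [NormOneClass A]
    (Q : ℤ[X]) : ∃ C, 0 ≤ C ∧ ∀ w : A, ‖aeval w Q‖ ≤ C * Real.exp ‖w‖ := by
  refine ⟨∑ i ∈ Finset.range (Q.natDegree + 1), ‖Q.coeff i‖ * i !, by positivity, fun w => ?_⟩
  rw [aeval_eq_sum_range, Finset.sum_mul]
  refine (norm_sum_le _ _).trans (Finset.sum_le_sum fun i _ => ?_)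
  have hpow : ‖w‖ ^ i ≤ i ! * Real.exp ‖w‖ := by
    have := Real.pow_div_factorial_le_exp _ (norm_nonneg w) i
    rwa [div_le_iff₀' (by positivity)] at this
  calc ‖Q.coeff i • w ^ i‖ ≤ ‖Q.coeff i‖ * ‖w‖ ^ i :=
        (norm_zsmul_le _ _).trans (by gcongr; exact norm_pow_le _ _)
    _ ≤ ‖Q.coeff i‖ * (i ! * Real.exp ‖w‖) := by gcongr
    _ = _ := by ring

noncomputable def bargmannKernel (x : ℝ) (z : ℂ) : ℂ :=
  Complex.exp ((√2 : ℂ) * x * z - (x : ℂ) ^ 2 / 2 - z ^ 2 / 2)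

theorem norm_bargmannKernel_le (x : ℝ) (z : ℂ) :
    ‖bargmannKernel x z‖ ≤ Real.exp (√2 * ‖z‖ * |x| + ‖z‖ ^ 2 / 2 - x ^ 2 / 2) := by
  rw [bargmannKernel, Complex.norm_exp, Real.exp_le_exp]
  have hlin : ((√2 : ℂ) * x * z).re ≤ √2 * ‖z‖ * |x| := by
    refine (Complex.re_le_norm _).trans_eq ?_
    simp only [norm_mul, Complex.norm_real, Real.norm_eq_abs, abs_of_nonneg (Real.sqrt_nonneg 2)]
    ring
  have hsq : (-(z ^ 2 / 2)).re ≤ ‖z‖ ^ 2 / 2 := by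
    refine (Complex.re_le_norm _).trans_eq ?_
    simp [norm_pow]
  have hx : ((x : ℂ) ^ 2 / 2).re = x ^ 2 / 2 := by norm_cast
  rw [sub_eq_add_neg _ (z ^ 2 / 2), Complex.add_re, Complex.sub_re, hx]
  linarith

theorem hasDerivAt_bargmannKernel (x : ℝ) (z : ℂ) :
    HasDerivAt (bargmannKernel x) ((√2 * x - z) * bargmannKernel x z) z := by
  have h := (((hasDerivAt_id z).const_mul ((√2 : ℂ) * x)).sub_const ((x : ℂ) ^ 2 / 2)).sub
    ((hasDerivAt_pow 2 z).div_const 2)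
  refine h.cexp.congr_deriv ?_
  simp only [bargmannKernel, Pi.sub_apply, id]
  push_cast
  ring

theorem hasDerivAt_aeval_hermite_mul_bargmannKernel (N : ℕ) (x : ℝ) (z : ℂ) :
    HasDerivAt (fun z => aeval ((√2 : ℂ) * x - z) (hermite N) * bargmannKernel x z)
      (aeval ((√2 : ℂ) * x - z) (hermite (N + 1)) * bargmannKernel x z) z := by
  have hP : HasDerivAt (fun z : ℂ => aeval ((√2 : ℂ) * x - z) (hermite N))
      (-aeval ((√2 : ℂ) * x - z) (derivative (hermite N))) z :=
    (((hermite N).hasDerivAt_aeval _).comp z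
      ((hasDerivAt_id' z).const_sub ((√2 : ℂ) * x))).congr_deriv (mul_neg_one _)
  refine (hP.mul (hasDerivAt_bargmannKernel x z)).congr_deriv ?_
  rw [hermite_succ]
  simp only [map_sub, map_mul, aeval_X]
  ring

theorem exists_norm_aeval_mul_bargmannKernel_le (Q : ℤ[X]) (R : ℝ) :
    ∃ C, ∀ x : ℝ, ∀ z : ℂ, ‖z‖ ≤ R →
      ‖aeval ((√2 : ℂ) * x - z) Q * bargmannKernel x z‖ ≤ C * Real.exp (-x ^ 2 / 4) := by
  obtain ⟨C, hC0, hC⟩ := Q.exists_norm_aeval_le_mul_exp (A := ℂ)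
  set a := √2 * (1 + R)
  refine ⟨C * Real.exp (a ^ 2 + R + R ^ 2 / 2), fun x z hz => ?_⟩
  have hw : ‖(√2 : ℂ) * x - z‖ ≤ √2 * |x| + R := by
    refine (norm_sub_le _ _).trans (add_le_add (le_of_eq ?_) hz)
    simp [abs_of_nonneg (Real.sqrt_nonneg 2)]
  have hz2 : ‖z‖ ^ 2 ≤ R ^ 2 := pow_le_pow_left₀ (norm_nonneg z) hz 2
  have hzx : √2 * ‖z‖ * |x| ≤ √2 * R * |x| := by gcongr
  have hquad : a * |x| - x ^ 2 / 4 ≤ a ^ 2 := by nlinarith [sq_nonneg (|x| / 2 - a), sq_abs x]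
  calc ‖aeval ((√2 : ℂ) * x - z) Q * bargmannKernel x z‖
      ≤ C * Real.exp (√2 * |x| + R) *
          Real.exp (√2 * ‖z‖ * |x| + ‖z‖ ^ 2 / 2 - x ^ 2 / 2) := by
        rw [norm_mul]
        gcongr
        · exact (hC _).trans (by gcongr)
        · exact norm_bargmannKernel_le x z
    _ ≤ C * Real.exp (a ^ 2 + R + R ^ 2 / 2 + -x ^ 2 / 4) := by
        rw [mul_assoc, ← Real.exp_add]
        refine mul_le_mul_of_nonneg_left (Real.exp_le_exp.mpr ?_) hC0
        have ha : a * |x| = √2 * |x| + √2 * R * |x| := by ring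
        linarith
    _ = C * Real.exp (a ^ 2 + R + R ^ 2 / 2) * Real.exp (-x ^ 2 / 4) := by
        rw [Real.exp_add, mul_assoc]

theorem memLp_two_exp_neg_mul_sq {b : ℝ} (hb : 0 < b) :
    MemLp (fun x : ℝ => Real.exp (-b * x ^ 2)) 2 := by
  refine (memLp_two_iff_integrable_sq (by fun_prop)).2 <|
    (integrable_exp_neg_mul_sq (by positivity : 0 < 2 * b)).congr (.of_forall fun x => ?_)
  dsimp only
  rw [← Real.exp_nat_mul]
  push_cast
  ring_nf

noncomputable def bargmannIntegrand (f : ℝ → ℂ) (Q : ℤ[X]) (z : ℂ) (x : ℝ) : ℂ :=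
  starRingEnd ℂ (f x) * (aeval ((√2 : ℂ) * x - z) Q * bargmannKernel x z)

section bargmannIntegrand

variable {f : ℝ → ℂ}

theorem aestronglyMeasurable_bargmannIntegrand (hf : AEStronglyMeasurable f) (Q : ℤ[X])
    (z : ℂ) : AEStronglyMeasurable (bargmannIntegrand f Q z) := by
  have hK : Continuous fun x : ℝ => aeval ((√2 : ℂ) * x - z) Q * bargmannKernel x z := by
    unfold bargmannKernel
    fun_prop
  exact (Complex.continuous_conj.comp_aestronglyMeasurable hf).mul hK.aestronglyMeasurable

theorem exists_integrable_bound_bargmannIntegrand (hf : MemLp f 2) (Q : ℤ[X]) (R : ℝ) :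
    ∃ g : ℝ → ℝ, Integrable g ∧ ∀ x z, ‖z‖ ≤ R → ‖bargmannIntegrand f Q z x‖ ≤ g x := by
  obtain ⟨C, hC⟩ := exists_norm_aeval_mul_bargmannKernel_le Q R
  refine ⟨fun x => C * (‖f x‖ * Real.exp (-(1 / 4) * x ^ 2)),
    (hf.norm.integrable_mul (memLp_two_exp_neg_mul_sq (by norm_num))).const_mul C,
    fun x z hz => ?_⟩
  dsimp only
  rw [bargmannIntegrand, norm_mul, Complex.norm_conj, mul_left_comm]
  gcongr
  exact (hC x z hz).trans_eq (by ring_nf)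

theorem integrable_bargmannIntegrand (hf : MemLp f 2) (Q : ℤ[X]) (z : ℂ) :
    Integrable (bargmannIntegrand f Q z) := by
  obtain ⟨g, hg, hbound⟩ := exists_integrable_bound_bargmannIntegrand hf Q ‖z‖
  exact hg.mono' (aestronglyMeasurable_bargmannIntegrand hf.1 Q z)
    (.of_forall fun x => hbound x z le_rfl)

theorem hasDerivAt_integral_bargmannIntegrand_hermite (hf : MemLp f 2) (N : ℕ) (z₀ : ℂ) :
    HasDerivAt (fun z => ∫ x, bargmannIntegrand f (hermite N) z x)
      (∫ x, bargmannIntegrand f (hermite (N + 1)) z₀ x) z₀ := by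
  obtain ⟨g, hg, hbound⟩ := exists_integrable_bound_bargmannIntegrand hf (hermite (N + 1))
    (‖z₀‖ + 1)
  have hball : ∀ z ∈ Metric.ball z₀ 1, ‖z‖ ≤ ‖z₀‖ + 1 := fun z hz =>
    (norm_le_norm_add_norm_sub' z z₀).trans <| by
      rw [← dist_eq_norm]
      linarith [Metric.mem_ball.1 hz]
  refine (hasDerivAt_integral_of_dominated_loc_of_deriv_le (Metric.ball_mem_nhds z₀ one_pos)
    (.of_forall fun z => aestronglyMeasurable_bargmannIntegrand hf.1 _ z)
    (integrable_bargmannIntegrand hf _ z₀)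
    (aestronglyMeasurable_bargmannIntegrand hf.1 _ z₀)
    (.of_forall fun x z hz => hbound x z (hball z hz)) hg
    (.of_forall fun x z _ => ?_)).2
  exact (hasDerivAt_aeval_hermite_mul_bargmannKernel N x z).const_mul _

end bargmannIntegrand

theorem iteratedDeriv_eq_of_hasDerivAt_succ {𝕜 F : Type*} [NontriviallyNormedField 𝕜]
    [NormedAddCommGroup F] [NormedSpace 𝕜 F] {g : ℕ → 𝕜 → F}
    (h : ∀ n z, HasDerivAt (g n) (g (n + 1) z) z) (n : ℕ) : iteratedDeriv n (g 0) = g n := by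
  induction n with
  | zero => exact iteratedDeriv_zero
  | succ n ih => exact iteratedDeriv_succ.trans (ih ▸ funext fun z => (h n z).deriv)

theorem exp_mul_integral_eq_integral_bargmannIntegrand (f : ℝ → ℂ) (Q : ℤ[X]) (z : ℂ) (c : ℂ) :
    Complex.exp (-z ^ 2 / 2) / c *
      ∫ x : ℝ, starRingEnd ℂ (f x) * aeval ((√2 : ℂ) * x - z) Q *
        Complex.exp ((√2 : ℂ) * x * z - (x : ℂ) ^ 2 / 2) =
      c⁻¹ * ∫ x, bargmannIntegrand f Q z x := by
  rw [div_eq_inv_mul, mul_assoc, ← integral_const_mul]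
  congr 2 with x
  rw [bargmannIntegrand, bargmannKernel, sub_eq_add_neg _ (z ^ 2 / 2), Complex.exp_add,
    neg_div]
  ring

/-- The `N`-th complex derivative of the Bargmann transform of `f ∈ L²(ℝ,ℂ)` at `z` equals
`(e^{−z²/2}/π^{1/4}) ∫_ℝ conj(f(x)) He_N(√2·x − z) e^{√2·xz − x²/2} dx`, where `He_N` is the
probabilists' Hermite polynomial. -/
theorem iteratedDeriv_bargmann (f : ℝ → ℂ) (hf : MemLp f 2 (volume : Measure ℝ))
    (N : ℕ) (z : ℂ) :
    iteratedDeriv N (bargmann f) z =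
      Complex.exp (-z ^ 2 / 2) / ((π ^ ((1 : ℝ) / 4) : ℝ) : ℂ) *
        ∫ x : ℝ, (starRingEnd ℂ) (f x) *
          Polynomial.aeval ((Real.sqrt 2 : ℂ) * (x : ℂ) - z) (Polynomial.hermite N) *
          Complex.exp ((Real.sqrt 2 : ℂ) * (x : ℂ) * z - (x : ℂ) ^ 2 / 2) := by
  set c : ℂ := ((π ^ ((1 : ℝ) / 4) : ℝ) : ℂ)
  have h0 : bargmann f = fun w => c⁻¹ * ∫ x, bargmannIntegrand f (hermite 0) w x := by
    ext w
    rw [← exp_mul_integral_eq_integral_bargmannIntegrand]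
    simp [bargmann, c]
  have hderiv (n : ℕ) (w : ℂ) :
      HasDerivAt (fun w => c⁻¹ * ∫ x, bargmannIntegrand f (hermite n) w x)
        (c⁻¹ * ∫ x, bargmannIntegrand f (hermite (n + 1)) w x) w :=
    (hasDerivAt_integral_bargmannIntegrand_hermite hf n w).const_mul _
  rw [h0, iteratedDeriv_eq_of_hasDerivAt_succ hderiv,
    exp_mul_integral_eq_integral_bargmannIntegrand]
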